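/- Let p(x) ∝ (a+x)^{−3/2} e^{−x} on (0,∞) with a > 0, and u(x) = x. With Φ(y) = cosh(y) − 1, the function α ↦ E_p[Φ(αu)] is finite for α ∈ [−1,1] and infinite for |α| > 1; in particular E_p[Φ(u)] < ∞ (the unit ball boundary of the Orlicz norm is attained with finite modular at a point where the modular is not steep). -/

import Mathlib

/-!
Write the integrand as `C⁻¹ (a + x)^(-3/2) · (cosh (α x) - 1) e^{-x}`. For `|α| ≤ 1` the last
factor is at most `1`, so the integrand is dominated by the integrable `C⁻¹ (a + x)^(-3/2)`.
For `|α| > 1` it is at least `e^{(|α|-1) x} / 2 - 1`, and the exponential beats the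
polynomial decay, so the integrand tends to `∞` and its integral over a half-line diverges.
-/

open MeasureTheory Real Set Filter Topology

lemma integrableOn_add_rpow_Ioi {a s : ℝ} (ha : 0 < a) (hs : s < -1) :
    IntegrableOn (fun x : ℝ => (a + x) ^ s) (Ioi 0) := by
  simpa only [add_comm a] using integrableOn_add_rpow_Ioi_of_lt hs (neg_lt_zero.2 ha)

lemma integral_add_rpow_mul_exp_neg_pos {a s : ℝ} (ha : 0 < a) (hs : s < -1) :
    0 < ∫ x in Ioi (0 : ℝ), (a + x) ^ s * exp (-x) := by
  have hpos : ∀ x ∈ Ioi (0 : ℝ), 0 < (a + x) ^ s * exp (-x) := fun x hx =>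
    mul_pos (rpow_pos_of_pos (by linarith [hx.out]) s) (exp_pos _)
  have hint : IntegrableOn (fun x : ℝ => (a + x) ^ s * exp (-x)) (Ioi 0) := by
    refine (integrableOn_add_rpow_Ioi ha hs).mono' ?_ ?_
    · exact (by fun_prop : Measurable fun x : ℝ => (a + x) ^ s * exp (-x)).aestronglyMeasurable
    · filter_upwards [ae_restrict_mem measurableSet_Ioi] with x hx
      rw [norm_of_nonneg (hpos x hx).le]
      exact mul_le_of_le_one_right (rpow_nonneg (by linarith [hx.out]) s)
        (exp_le_one_iff.2 (by linarith [hx.out]))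
  rw [setIntegral_pos_iff_support_of_nonneg_ae
    ((ae_restrict_mem measurableSet_Ioi).mono fun x hx => (hpos x hx).le) hint,
    inter_eq_self_of_subset_right (s := Function.support _) fun x hx => (hpos x hx).ne',
    volume_Ioi]
  exact ENNReal.zero_lt_top

lemma cosh_mul_sub_one_mul_exp_neg_le_one {α x : ℝ} (hα : |α| ≤ 1) (hx : 0 ≤ x) :
    (cosh (α * x) - 1) * exp (-x) ≤ 1 := by
  have hcosh : cosh (α * x) ≤ cosh x := by
    rw [cosh_le_cosh, abs_mul]
    exact mul_le_of_le_one_left (abs_nonneg x) hα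
  have hexp : cosh x ≤ exp x := by
    rw [cosh_eq]
    linarith [exp_le_exp.2 (by linarith : -x ≤ x)]
  calc (cosh (α * x) - 1) * exp (-x) ≤ exp x * exp (-x) :=
        mul_le_mul_of_nonneg_right (by linarith) (exp_pos _).le
    _ = 1 := by rw [← exp_add, add_neg_cancel, exp_zero]

lemma exp_mul_div_two_sub_one_le_cosh_mul_sub_one_mul_exp_neg {α x : ℝ} (hx : 0 ≤ x) :
    exp ((|α| - 1) * x) / 2 - 1 ≤ (cosh (α * x) - 1) * exp (-x) := by
  have hcosh : exp (|α| * x) / 2 ≤ cosh (α * x) := by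
    rw [← cosh_abs, abs_mul, abs_of_nonneg hx, cosh_eq]
    linarith [exp_pos (-(|α| * x))]
  have hsplit : exp ((|α| - 1) * x) = exp (|α| * x) * exp (-x) := by
    rw [← exp_add]; ring_nf
  have hexp : exp (-x) ≤ 1 := exp_le_one_iff.2 (by linarith)
  nlinarith [exp_pos (-x)]

lemma tendsto_exp_mul_mul_add_rpow_atTop {b : ℝ} (hb : 0 < b) (a s : ℝ) :
    Tendsto (fun x => exp (b * x) * (a + x) ^ s) atTop atTop := by
  have h := ((tendsto_exp_mul_div_rpow_atTop (-s) b hb).comp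
    (tendsto_atTop_add_const_left atTop a tendsto_id)).const_mul_atTop (exp_pos (-(b * a)))
  refine h.congr' ?_
  filter_upwards [eventually_ge_atTop (-a)] with x hx
  simp only [Function.comp_apply, id]
  rw [rpow_neg (by linarith), div_inv_eq_mul, ← mul_assoc, ← exp_add]
  ring_nf

lemma tendsto_cosh_mul_sub_one_mul_add_rpow_mul_exp_neg_atTop {α : ℝ} (hα : 1 < |α|) (a : ℝ)
    {s : ℝ} (hs : s < 0) :
    Tendsto (fun x => (cosh (α * x) - 1) * ((a + x) ^ s * exp (-x))) atTop atTop := by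
  have hgrow : Tendsto (fun x => exp ((|α| - 1) * x) * (a + x) ^ s / 2) atTop atTop :=
    (tendsto_exp_mul_mul_add_rpow_atTop (sub_pos.2 hα) a s).atTop_div_const two_pos
  have hdecay : Tendsto (fun x : ℝ => (a + x) ^ s) atTop (𝓝 0) := by
    have h := (tendsto_rpow_neg_atTop (neg_pos.2 hs)).comp
      (tendsto_atTop_add_const_left atTop a tendsto_id)
    rwa [neg_neg] at h
  refine tendsto_atTop_mono' _ ?_ (hgrow.atTop_add hdecay.neg)
  filter_upwards [eventually_ge_atTop 0, eventually_ge_atTop (-a)] with x hx hxa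
  have hP : 0 ≤ (a + x) ^ s := rpow_nonneg (by linarith) s
  have := mul_le_mul_of_nonneg_left
    (exp_mul_div_two_sub_one_le_cosh_mul_sub_one_mul_exp_neg (α := α) hx) hP
  linarith

lemma lintegral_ofReal_Ioi_eq_top_of_tendsto_atTop {f : ℝ → ℝ} (hf : Tendsto f atTop atTop)
    (c : ℝ) : ∫⁻ x in Ioi c, ENNReal.ofReal (f x) = ⊤ := by
  obtain ⟨N, hN⟩ := eventually_atTop.1 (hf.eventually_ge_atTop 1)
  refine eq_top_iff.2 ?_
  calc ⊤ = ∫⁻ _ in Ioi (max N c), 1 := by rw [setLIntegral_one, volume_Ioi]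
    _ ≤ ∫⁻ x in Ioi (max N c), ENNReal.ofReal (f x) :=
        setLIntegral_mono' measurableSet_Ioi fun x hx =>
          ENNReal.one_le_ofReal.2 (hN x ((le_max_left N c).trans hx.out.le))
    _ ≤ ∫⁻ x in Ioi c, ENNReal.ofReal (f x) :=
        lintegral_mono_set (Ioi_subset_Ioi (le_max_right N c))

theorem non_steep_orlicz_modular (a : ℝ) (ha : 0 < a)
    (C : ℝ) (hC : C = ∫ x in Set.Ioi (0 : ℝ), (a + x) ^ (-(3 : ℝ) / 2) * Real.exp (-x)) :
    ∀ α : ℝ,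
      (∫⁻ x in Set.Ioi (0 : ℝ), ENNReal.ofReal
          ((Real.cosh (α * x) - 1) * (C⁻¹ * (a + x) ^ (-(3 : ℝ) / 2) * Real.exp (-x)))) < ⊤
        ↔ |α| ≤ 1 := by
  have hs : -(3 : ℝ) / 2 < -1 := by norm_num
  have hCinv : 0 < C⁻¹ := inv_pos.2 (hC ▸ integral_add_rpow_mul_exp_neg_pos ha hs)
  intro α
  constructor
  · contrapose!
    intro hα
    refine (lintegral_ofReal_Ioi_eq_top_of_tendsto_atTop ?_ 0).ge
    exact ((tendsto_cosh_mul_sub_one_mul_add_rpow_mul_exp_neg_atTop hα a (hs.trans neg_one_lt_zero)).const_mul_atTop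
      hCinv).congr fun x => by ring
  · intro hα
    refine lt_of_le_of_lt (setLIntegral_mono' measurableSet_Ioi fun x hx => ?_)
      (((integrableOn_add_rpow_Ioi ha hs).const_mul C⁻¹).lintegral_lt_top)
    refine ENNReal.ofReal_le_ofReal ?_
    have hP : 0 ≤ C⁻¹ * (a + x) ^ (-(3 : ℝ) / 2) :=
      mul_nonneg hCinv.le (rpow_nonneg (by linarith [hx.out]) _)
    calc (cosh (α * x) - 1) * (C⁻¹ * (a + x) ^ (-(3 : ℝ) / 2) * exp (-x))
        = C⁻¹ * (a + x) ^ (-(3 : ℝ) / 2) * ((cosh (α * x) - 1) * exp (-x)) := by ring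
      _ ≤ C⁻¹ * (a + x) ^ (-(3 : ℝ) / 2) :=
        mul_le_of_le_one_right hP (cosh_mul_sub_one_mul_exp_neg_le_one hα hx.out.le)
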